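/- Fix p > 1 and integer N ≥ 1, and define h(x) := sin^p(πx) ∑_{k=N+1}^∞ (1/(k−x)^p + 1/(k+x−1)^p) for x ∈ (1/2, 1). Then h is twice differentiable at 1/2 (from the right, by symmetry), h'(1/2) = 0, and h''(1/2) = ∑_{k=N+1}^∞ [2p(p+1)/(k − 1/2)^{p+2} − 2pπ²/(k − 1/2)^p] = 2^{p+1} p (4(p+1)λ(p+2; N) − π²λ(p; N)). -/

import Mathlib

open Real

/-- The incomplete Lambda function `λ(s; a) = ∑_{n=1}^∞ (2(n+a)-1)^{-s}`. -/
noncomputable def lam (s a : ℝ) : ℝ := ∑' n : ℕ, 1 / (2 * ((n : ℝ) + 1 + a) - 1) ^ s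

/-!
Near `x = 1/2` the tail equals `sin (π x) ^ p * (ζ(p, N + 1 - x) + ζ(p, N + x))`, where
`ζ(s, x) = ∑_{k ≥ 0} (k + x)^{-s}` is the real Hurwitz zeta function, and termwise differentiation
gives `∂ₓ ζ(s, x) = -s ζ(s + 1, x)`. Both factors are symmetric about `1/2`, so their first
derivatives vanish there, and Leibniz's rule reduces `h''(1/2)` to
`(sin^p)''(1/2) · 2ζ(p, N + 1/2) + 2p(p + 1) ζ(p + 2, N + 1/2)` with `(sin^p)''(1/2) = -pπ²`.
Finally `ζ(s, N + 1/2) = 2^s λ(s; N)`.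
-/

open Filter Topology Set

noncomputable def realHurwitzZeta (s x : ℝ) : ℝ := ∑' k : ℕ, ((k : ℝ) + x) ^ (-s)

lemma summable_nat_add_rpow_neg {s x : ℝ} (hs : 1 < s) (hx : 0 < x) :
    Summable fun k : ℕ => ((k : ℝ) + x) ^ (-s) := by
  refine ((Real.summable_one_div_nat_add_rpow x s).2 hs).congr fun k => ?_
  have hpos : 0 < (k : ℝ) + x := by positivity
  rw [abs_of_pos hpos, rpow_neg hpos.le, one_div]

lemma hasSum_div_nat_add_rpow {s x : ℝ} (hs : 1 < s) (hx : 0 < x) (A : ℝ) :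
    HasSum (fun k : ℕ => A / ((k : ℝ) + x) ^ s) (A * realHurwitzZeta s x) := by
  have hterm : (fun k : ℕ => A / ((k : ℝ) + x) ^ s) = fun k : ℕ => A * ((k : ℝ) + x) ^ (-s) :=
    funext fun k => by rw [rpow_neg (by positivity), div_eq_mul_inv]
  rw [hterm]
  exact (summable_nat_add_rpow_neg hs hx).hasSum.mul_left A

lemma tsum_div_rpow_sub_div_rpow {s x : ℝ} (hs : 1 < s) (hx : 0 < x) (A B : ℝ) :
    ∑' k : ℕ, (A / ((k : ℝ) + x) ^ (s + 2) - B / ((k : ℝ) + x) ^ s)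
      = A * realHurwitzZeta (s + 2) x - B * realHurwitzZeta s x :=
  ((hasSum_div_nat_add_rpow (by linarith) hx A).sub (hasSum_div_nat_add_rpow hs hx B)).tsum_eq

lemma hasDerivAt_realHurwitzZeta {s x : ℝ} (hs : 1 < s) (hx : 0 < x) :
    HasDerivAt (realHurwitzZeta s) (-s * realHurwitzZeta (s + 1) x) x := by
  have hterm : ∀ (k : ℕ), ∀ y ∈ Ioi (x / 2), HasDerivAt (fun y => ((k : ℝ) + y) ^ (-s))
      (-s * ((k : ℝ) + y) ^ (-(s + 1))) y := by
    intro k y hy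
    have hpos : 0 < (k : ℝ) + y := by have := (half_pos hx).trans hy; positivity
    convert ((hasDerivAt_id' y).const_add (k : ℝ)).rpow_const (p := -s) (Or.inl hpos.ne') using 1
    rw [neg_add', one_mul]
  have hbound : ∀ (k : ℕ), ∀ y ∈ Ioi (x / 2),
      ‖-s * ((k : ℝ) + y) ^ (-(s + 1))‖ ≤ s * ((k : ℝ) + x / 2) ^ (-(s + 1)) := by
    intro k y hy
    have hpos : 0 < (k : ℝ) + x / 2 := by positivity
    have hle : (k : ℝ) + x / 2 ≤ k + y := by linarith [mem_Ioi.1 hy]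
    rw [norm_mul, norm_neg, norm_of_nonneg (by linarith : (0 : ℝ) ≤ s),
      norm_of_nonneg (rpow_nonneg (hpos.trans_le hle).le _)]
    exact mul_le_mul_of_nonneg_left (rpow_le_rpow_of_nonpos hpos hle (by linarith)) (by linarith)
  have hx_mem : x ∈ Ioi (x / 2) := half_lt_self hx
  have := hasDerivAt_tsum_of_isPreconnected
    ((summable_nat_add_rpow_neg (by linarith) (half_pos hx)).mul_left s) isOpen_Ioi
    isPreconnected_Ioi hterm hbound hx_mem (summable_nat_add_rpow_neg hs hx) hx_mem
  rwa [tsum_mul_left] at this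

section Reflection

variable {s a x : ℝ}

lemma eventually_reflect_pos (ha : 0 ≤ a) : ∀ᶠ x in 𝓝 (1 / 2 : ℝ), 0 < a + 1 - x ∧ 0 < a + x := by
  filter_upwards [Ioo_mem_nhds (by norm_num : (0 : ℝ) < 1 / 2) (by norm_num : (1 / 2 : ℝ) < 1)]
    with x hx using ⟨by linarith [hx.2], by linarith [hx.1]⟩

lemma hasDerivAt_realHurwitzZeta_reflect (hs : 1 < s) (hx₀ : 0 < a + 1 - x) (hx₁ : 0 < a + x) :
    HasDerivAt (fun y => realHurwitzZeta s (a + 1 - y) + realHurwitzZeta s (a + y))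
      (s * realHurwitzZeta (s + 1) (a + 1 - x) - s * realHurwitzZeta (s + 1) (a + x)) x := by
  have h₀ := (hasDerivAt_realHurwitzZeta hs hx₀).comp x ((hasDerivAt_id' x).const_sub (a + 1))
  have h₁ := (hasDerivAt_realHurwitzZeta hs hx₁).comp x ((hasDerivAt_id' x).const_add a)
  exact (h₀.add h₁).congr_deriv (by ring)

lemma hasDerivAt_realHurwitzZeta_reflect_sub (hs : 1 < s) (hx₀ : 0 < a + 1 - x)
    (hx₁ : 0 < a + x) :
    HasDerivAt
      (fun y => s * realHurwitzZeta (s + 1) (a + 1 - y) - s * realHurwitzZeta (s + 1) (a + y))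
      (s * (s + 1) * (realHurwitzZeta (s + 2) (a + 1 - x) + realHurwitzZeta (s + 2) (a + x)))
      x := by
  have hs' : 1 < s + 1 := by linarith
  have h₀ := (hasDerivAt_realHurwitzZeta hs' hx₀).comp x ((hasDerivAt_id' x).const_sub (a + 1))
  have h₁ := (hasDerivAt_realHurwitzZeta hs' hx₁).comp x ((hasDerivAt_id' x).const_add a)
  rw [show s + 1 + 1 = s + 2 by ring] at h₀ h₁
  exact ((h₀.const_mul s).sub (h₁.const_mul s)).congr_deriv (by ring)

lemma tsum_reflect_eq_realHurwitzZeta (hs : 1 < s) (hx₀ : 0 < a + 1 - x) (hx₁ : 0 < a + x) :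
    ∑' k : ℕ, (1 / ((k : ℝ) + a + 1 - x) ^ s + 1 / ((k : ℝ) + a + 1 + x - 1) ^ s)
      = realHurwitzZeta s (a + 1 - x) + realHurwitzZeta s (a + x) := by
  have h₀ := summable_nat_add_rpow_neg hs hx₀
  have h₁ := summable_nat_add_rpow_neg hs hx₁
  rw [realHurwitzZeta, realHurwitzZeta, ← h₀.tsum_add h₁]
  refine tsum_congr fun k => ?_
  rw [show (k : ℝ) + a + 1 - x = k + (a + 1 - x) by ring,
    show (k : ℝ) + a + 1 + x - 1 = k + (a + x) by ring,
    rpow_neg (add_pos_of_nonneg_of_pos k.cast_nonneg hx₀).le,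
    rpow_neg (add_pos_of_nonneg_of_pos k.cast_nonneg hx₁).le, one_div, one_div]

end Reflection

lemma hasDerivAt_deriv_mul {𝕜 : Type*} [NontriviallyNormedField 𝕜] {f g f' g' : 𝕜 → 𝕜}
    {f'' g'' x : 𝕜} (hf : ∀ᶠ y in 𝓝 x, HasDerivAt f (f' y) y)
    (hg : ∀ᶠ y in 𝓝 x, HasDerivAt g (g' y) y) (hf' : HasDerivAt f' f'' x)
    (hg' : HasDerivAt g' g'' x) :
    HasDerivAt (deriv fun y => f y * g y) (f'' * g x + 2 * (f' x * g' x) + f x * g'') x := by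
  have hderiv : deriv (fun y => f y * g y) =ᶠ[𝓝 x] fun y => f' y * g y + f y * g' y := by
    filter_upwards [hf, hg] with y hfy hgy using (hfy.mul hgy).deriv
  refine ((hf'.mul hg.self_of_nhds).add (hf.self_of_nhds.mul hg')).congr_of_eventuallyEq hderiv
    |>.congr_deriv (by ring)

lemma hasDerivAt_sin_pi_mul_rpow {p : ℝ} (hp : 1 ≤ p) (x : ℝ) :
    HasDerivAt (fun y => sin (π * y) ^ p) (p * π * cos (π * x) * sin (π * x) ^ (p - 1)) x := by
  have := ((hasDerivAt_id' x).const_mul π).sin.rpow_const (p := p) (Or.inr hp)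
  exact this.congr_deriv (by ring)

lemma hasDerivAt_deriv_sin_pi_mul_rpow_half (p : ℝ) :
    HasDerivAt (fun y => p * π * cos (π * y) * sin (π * y) ^ (p - 1)) (-(p * π ^ 2)) (1 / 2) := by
  have hsin : sin (π * (1 / 2)) = 1 := by rw [mul_one_div, sin_pi_div_two]
  have hcos : cos (π * (1 / 2)) = 0 := by rw [mul_one_div, cos_pi_div_two]
  have hsin_ne : sin (π * (1 / 2)) ≠ 0 := by rw [hsin]; exact one_ne_zero
  have hlin := (hasDerivAt_id' (1 / 2 : ℝ)).const_mul π
  have := (hlin.cos.const_mul (p * π)).mul (hlin.sin.rpow_const (p := p - 1) (Or.inl hsin_ne))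
  exact this.congr_deriv (by simp only [hsin, hcos, one_rpow]; ring)

lemma realHurwitzZeta_add_half_eq_lam (s : ℝ) {a : ℝ} (ha : 0 ≤ a + 1 / 2) :
    realHurwitzZeta s (a + 1 / 2) = 2 ^ s * lam s a := by
  rw [lam, realHurwitzZeta, ← tsum_mul_left]
  refine tsum_congr fun n => ?_
  have hpos : 0 ≤ (n : ℝ) + (a + 1 / 2) := add_nonneg n.cast_nonneg ha
  rw [show 2 * ((n : ℝ) + 1 + a) - 1 = 2 * (n + (a + 1 / 2)) by ring,
    mul_rpow zero_le_two hpos, rpow_neg hpos]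
  field_simp

theorem tail_second_deriv_at_half_general (p : ℝ) (hp : 1 < p) (N : ℕ) :
    let h : ℝ → ℝ := fun x =>
      Real.sin (π * x) ^ p *
        ∑' k : ℕ, (1 / (((k : ℝ) + N + 1) - x) ^ p + 1 / (((k : ℝ) + N + 1) + x - 1) ^ p)
    HasDerivAt h 0 (1/2) ∧
    HasDerivAt (deriv h)
      (∑' k : ℕ, (2 * p * (p + 1) / (((k : ℝ) + N + 1) - 1/2) ^ (p + 2)
        - 2 * p * π ^ 2 / (((k : ℝ) + N + 1) - 1/2) ^ p)) (1/2) ∧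
    (∑' k : ℕ, (2 * p * (p + 1) / (((k : ℝ) + N + 1) - 1/2) ^ (p + 2)
        - 2 * p * π ^ 2 / (((k : ℝ) + N + 1) - 1/2) ^ p))
      = 2 ^ (p + 1) * p * (4 * (p + 1) * lam (p + 2) N - π ^ 2 * lam p N) := by
  intro h
  set S : ℝ → ℝ := fun x => realHurwitzZeta p (N + 1 - x) + realHurwitzZeta p (N + x)
  set S' : ℝ → ℝ := fun x =>
    p * realHurwitzZeta (p + 1) (N + 1 - x) - p * realHurwitzZeta (p + 1) (N + x)
  have hpos := eventually_reflect_pos (a := (N : ℝ)) N.cast_nonneg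
  have hhS : h =ᶠ[𝓝 (1 / 2)] fun x => sin (π * x) ^ p * S x := by
    filter_upwards [hpos] with x hx using congrArg _ (tsum_reflect_eq_realHurwitzZeta hp hx.1 hx.2)
  have hS : ∀ᶠ x in 𝓝 (1 / 2 : ℝ), HasDerivAt S (S' x) x := by
    filter_upwards [hpos] with x hx using hasDerivAt_realHurwitzZeta_reflect hp hx.1 hx.2
  have hhalf : (N : ℝ) + 1 - 1 / 2 = N + 1 / 2 := by ring
  have hk : ∀ k : ℕ, (k : ℝ) + N + 1 - 1 / 2 = k + (N + 1 / 2) := fun k => by ring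
  have hT := tsum_div_rpow_sub_div_rpow hp (x := N + 1 / 2) (by positivity)
  have hsin : sin (π * (1 / 2)) = 1 := by rw [mul_one_div, sin_pi_div_two]
  have hcos : cos (π * (1 / 2)) = 0 := by rw [mul_one_div, cos_pi_div_two]
  refine ⟨?_, ?_, ?_⟩
  · refine ((hasDerivAt_sin_pi_mul_rpow hp.le _).mul hS.self_of_nhds).congr_of_eventuallyEq hhS
      |>.congr_deriv ?_
    simp only [S', hcos, hhalf]
    ring
  · have hS'' := hasDerivAt_realHurwitzZeta_reflect_sub hp hpos.self_of_nhds.1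
      hpos.self_of_nhds.2
    refine (hasDerivAt_deriv_mul (.of_forall (hasDerivAt_sin_pi_mul_rpow hp.le)) hS
      (hasDerivAt_deriv_sin_pi_mul_rpow_half p) hS'').congr_of_eventuallyEq hhS.deriv
      |>.congr_deriv ?_
    simp only [hk, hT, S, S', hsin, hcos, hhalf, one_rpow]
    ring
  · simp only [hk, hT]
    rw [realHurwitzZeta_add_half_eq_lam _ (by positivity),
      realHurwitzZeta_add_half_eq_lam _ (by positivity), rpow_add two_pos, rpow_add two_pos,
      rpow_two, rpow_one]
    ring

theorem tail_second_deriv_at_half (p : ℝ) (hp : 1 < p) (N : ℕ) (hN : 1 ≤ N) :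
    let h : ℝ → ℝ := fun x =>
      Real.sin (π * x) ^ p *
        ∑' k : ℕ, (1 / (((k : ℝ) + N + 1) - x) ^ p + 1 / (((k : ℝ) + N + 1) + x - 1) ^ p)
    HasDerivAt h 0 (1/2) ∧
    HasDerivAt (deriv h)
      (∑' k : ℕ, (2 * p * (p + 1) / (((k : ℝ) + N + 1) - 1/2) ^ (p + 2)
        - 2 * p * π ^ 2 / (((k : ℝ) + N + 1) - 1/2) ^ p)) (1/2) ∧
    (∑' k : ℕ, (2 * p * (p + 1) / (((k : ℝ) + N + 1) - 1/2) ^ (p + 2)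
        - 2 * p * π ^ 2 / (((k : ℝ) + N + 1) - 1/2) ^ p))
      = 2 ^ (p + 1) * p * (4 * (p + 1) * lam (p + 2) N - π ^ 2 * lam p N) :=
  tail_second_deriv_at_half_general p hp N
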